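/- arXiv:1409.3973 — 3 statements merged into one kernel-verified Lean document; each statement's English description precedes it below -/
import Mathlib

section
/- Let I be an exchange ideal of a ring R. Then I is square stable if and only if for every a ∈ I, a² ∈ J(R) implies a ∈ J(R). -/
def SquareStable {R : Type*} [Ring R] (I : TwoSidedIdeal R) : Prop :=
  ∀ a ∈ I, ∀ b : R, (∃ x y : R, a * x + b * y = 1) → ∃ y : R, IsUnit (a ^ 2 + b * y)

def SquareStableRangeOne (R : Type*) [Ring R] : Prop :=
  ∀ a b : R, (∃ x y : R, a * x + b * y = 1) → ∃ y : R, IsUnit (a ^ 2 + b * y)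

def ExchangeIdeal {R : Type*} [Ring R] (I : TwoSidedIdeal R) : Prop :=
  ∀ a ∈ I, ∃ e : R, IsIdempotentElem e ∧ (∃ x : R, e = a * x) ∧ (∃ y : R, 1 - e = (1 - a) * y)

def RegularIdeal {R : Type*} [Ring R] (I : TwoSidedIdeal R) : Prop :=
  ∀ a ∈ I, ∃ x : R, a = a * x * a

def IsRegularElem {R : Type*} [Ring R] (a : R) : Prop := ∃ x : R, a = a * x * a

def IsStronglyRegularElem {R : Type*} [Ring R] (a : R) : Prop :=
  (∃ x : R, a = a ^ 2 * x) ∧ (∃ y : R, a = y * a ^ 2)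


/-!
If `a² ∈ J(R)` and `a² + (1 - a x) y` is a unit, then so is `(1 - a x) y`; this for every `x`
puts `a` in `J(R)`.

Conversely, the hypothesis says that the image of `I` in `R / J(R)` has no nonzero square-zero
elements, so the idempotents there are central (`e r (1 - e)` and `(1 - e) r e` square to zero).
Given `a x + b y = 1`, the exchange property yields an idempotent `e = a x'` with
`1 - e ∈ b R`. Modulo `J(R)`, `e` is central and `a e` has the right inverse `x' e` in the corner
`e R e`; the idempotent `e - x' a e` is central and kills `a e`, so `x' e` is a two-sided inverse.
Hence `1 - e + e a` is a unit modulo `J(R)`, and so is its square `a² + (1 - e)(1 - a²)`, which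
lies in `a² + b R`. Units lift modulo `J(R)`.
-/

open TwoSidedIdeal

section JacobsonRadical

variable {R : Type*} [Ring R]

theorem mem_jacobson_bot_iff {x : R} :
    x ∈ (⊥ : TwoSidedIdeal R).jacobson ↔ ∀ y, ∃ z, z * (1 + y * x) = 1 := by
  simp only [mem_jacobson_iff, mem_bot, sub_eq_zero, mul_add, mul_one, mul_assoc, add_comm]

theorem isUnit_one_add_of_mem_jacobson_bot {j : R} (hj : j ∈ (⊥ : TwoSidedIdeal R).jacobson) :
    IsUnit (1 + j) := by
  obtain ⟨z, hz⟩ := mem_jacobson_bot_iff.1 hj 1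
  rw [one_mul] at hz
  obtain ⟨w, hw⟩ := mem_jacobson_bot_iff.1 hj (-z)
  have hz' : 1 + -z * j = z := by
    rw [neg_mul, ← sub_eq_add_neg, sub_eq_iff_eq_add, ← hz, mul_add, mul_one]
  rw [hz'] at hw
  rw [left_inv_eq_right_inv hw hz] at hw
  exact isUnit_iff_exists.2 ⟨z, hw, hz⟩

theorem IsUnit.add_mem_jacobson_bot {u j : R} (hu : IsUnit u)
    (hj : j ∈ (⊥ : TwoSidedIdeal R).jacobson) : IsUnit (u + j) := by
  obtain ⟨u, rfl⟩ := hu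
  have hfactor : (u : R) + j = u * (1 + ↑u⁻¹ * j) := by
    rw [mul_add, mul_one, Units.mul_inv_cancel_left]
  rw [hfactor]
  exact u.isUnit.mul (isUnit_one_add_of_mem_jacobson_bot (mul_mem_left _ _ _ hj))

theorem isUnit_of_isUnit_map {S : Type*} [Ring S] (f : R →+* S) (hf : Function.Surjective f)
    (hker : ∀ r, f r = 0 → r ∈ (⊥ : TwoSidedIdeal R).jacobson) {r : R} (h : IsUnit (f r)) :
    IsUnit r := by
  obtain ⟨v, hv⟩ := hf ↑h.unit⁻¹
  have hlift : ∀ p q : R, f p * f q = 1 → IsUnit (p * q) := fun p q hpq => by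
    simpa using isUnit_one.add_mem_jacobson_bot (hker (p * q - 1) (by simp [hpq]))
  obtain ⟨w, hw, -⟩ := isUnit_iff_exists.1 (hlift r v (by simp [hv]))
  obtain ⟨w', -, hw'⟩ := isUnit_iff_exists.1 (hlift v r (by simp [hv]))
  exact isUnit_iff_exists_and_exists.2
    ⟨⟨v * w, by rw [← mul_assoc, hw]⟩, ⟨w' * v, by rw [mul_assoc, hw']⟩⟩

theorem isUnit_one_sub_mul_comm {a b : R} (h : IsUnit (1 - a * b)) : IsUnit (1 - b * a) := by
  obtain ⟨u, hu⟩ := h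
  refine isUnit_iff_exists.2 ⟨1 + b * ↑u⁻¹ * a, ?_, ?_⟩
  · calc (1 - b * a) * (1 + b * ↑u⁻¹ * a) = 1 - b * a + b * ((1 - a * b) * ↑u⁻¹) * a := by
          noncomm_ring
      _ = 1 := by rw [← hu, Units.mul_inv]; noncomm_ring
  · calc (1 + b * ↑u⁻¹ * a) * (1 - b * a) = 1 - b * a + b * (↑u⁻¹ * (1 - a * b)) * a := by
          noncomm_ring
      _ = 1 := by rw [← hu, Units.inv_mul]; noncomm_ring

theorem mem_jacobson_bot_of_forall_exists_mul_eq_one {a : R}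
    (h : ∀ x, ∃ u, (1 - a * x) * u = 1) : a ∈ (⊥ : TwoSidedIdeal R).jacobson := by
  have hunit : ∀ x, IsUnit (1 - a * x) := fun x => by
    obtain ⟨u, hu⟩ := h x
    -- `u = 1 - a * (-(x * u))` is right invertible as well, so `1 - a * x` is its inverse
    obtain ⟨w, hw⟩ := h (-(x * u))
    have hu' : 1 - a * -(x * u) = u := by
      rw [mul_neg, sub_neg_eq_add, ← hu]; noncomm_ring
    rw [hu'] at hw
    rw [← left_inv_eq_right_inv hu hw] at hw
    exact isUnit_iff_exists.2 ⟨u, hu, hw⟩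
  refine mem_jacobson_bot_iff.2 fun y => ?_
  have hy := isUnit_one_sub_mul_comm (hunit (-y))
  rw [neg_mul, sub_neg_eq_add] at hy
  exact ⟨_, hy.val_inv_mul⟩

end JacobsonRadical

section Idempotent

variable {S : Type*} [Ring S] {E : S}

theorem IsIdempotentElem.mul_mul_one_sub_sq_eq_zero (hE : IsIdempotentElem E) (s : S) :
    (E * s * (1 - E)) ^ 2 = 0 := by
  rw [sq, show E * s * (1 - E) * (E * s * (1 - E)) = E * s * ((1 - E) * E) * s * (1 - E) by
    simp only [mul_assoc], hE.one_sub_mul_self]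
  simp

theorem IsIdempotentElem.one_sub_mul_mul_sq_eq_zero (hE : IsIdempotentElem E) (s : S) :
    ((1 - E) * s * E) ^ 2 = 0 := by
  simpa using hE.one_sub.mul_mul_one_sub_sq_eq_zero s

theorem IsIdempotentElem.mul_one_sub_add_mul {A B : S} (hE : IsIdempotentElem E)
    (hEA : Commute E A) : (1 - E + E * A) * (1 - E + E * B) = 1 - E + E * (A * B) := by
  have hA : E * A * (1 - E) = 0 := by rw [hEA.eq, mul_assoc, hE.mul_one_sub_self, mul_zero]
  have hAB : E * A * (E * B) = E * (A * B) := by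
    rw [hEA.eq, mul_assoc, ← mul_assoc E, hE.eq, ← mul_assoc, ← hEA.eq, mul_assoc]
  calc (1 - E + E * A) * (1 - E + E * B)
      = (1 - E) * (1 - E) + (1 - E) * E * B + E * A * (1 - E) + E * A * (E * B) := by
        noncomm_ring
    _ = 1 - E + E * (A * B) := by
      rw [hE.one_sub.eq, hE.one_sub_mul_self, hA, hAB, zero_mul, add_zero, add_zero]

theorem IsIdempotentElem.sq_one_sub_add_mul {A : S} (hE : IsIdempotentElem E)
    (hEA : Commute E A) :
    (1 - E + E * A) ^ 2 = A ^ 2 + (1 - E) * (1 - A ^ 2) := by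
  rw [sq, hE.mul_one_sub_add_mul hEA, ← sq]; noncomm_ring

theorem IsIdempotentElem.isUnit_one_sub_add_mul {A X : S} (hE : IsIdempotentElem E)
    (hEA : Commute E A) (hEX : Commute E X) (hAX : A * X = E) (hXA : X * A * E = E) :
    IsUnit (1 - E + E * A) := by
  refine isUnit_iff_exists.2 ⟨1 - E + E * X, ?_, ?_⟩
  · rw [hE.mul_one_sub_add_mul hEA, hAX, hE.eq, sub_add_cancel]
  · rw [hE.mul_one_sub_add_mul hEX, ← mul_assoc, hEX.eq, mul_assoc, hEA.eq, ← mul_assoc, hXA,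
      sub_add_cancel]

variable {A X : S}

theorem IsIdempotentElem.isIdempotentElem_sub_mul_mul (hE : IsIdempotentElem E)
    (hEA : Commute E A) (hEX : Commute E X) (hAX : A * X = E) :
    IsIdempotentElem (E - X * A * E) := by
  have hAX' : ∀ t, A * (X * t) = E * t := fun t => by rw [← mul_assoc, hAX]
  refine IsIdempotentElem.sub ?_ hE ?_ ?_
  · simp only [IsIdempotentElem, mul_assoc, hEX.left_comm, hEA.left_comm, hAX', hE.eq]
  · simp only [mul_assoc, hE.eq]
  · simp only [mul_assoc, hEX.left_comm, hEA.left_comm, hE.eq]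

theorem IsIdempotentElem.mul_mul_eq_self_of_commute (hE : IsIdempotentElem E)
    (hEA : Commute E A) (hAX : A * X = E) (hF : Commute (E - X * A * E) A) :
    X * A * E = E := by
  have hAF : A * (E - X * A * E) = 0 := by
    rw [mul_sub, ← mul_assoc, ← mul_assoc, hAX, hEA.eq, mul_assoc, hE.eq, sub_self]
  have hFE : (E - X * A * E) * E = E - X * A * E := by
    rw [sub_mul, hE.eq, mul_assoc _ E, hE.eq]
  refine (sub_eq_zero.1 ?_).symm
  calc E - X * A * E = (E - X * A * E) * A * X := by
        rw [mul_assoc (E - X * A * E) A X, hAX, hFE]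
    _ = 0 := by rw [hF.eq, hAF, zero_mul]

end Idempotent

section ReducedModulo

variable {R S : Type*} [Ring R] [Ring S] (f : R →+* S) {I : TwoSidedIdeal R}

theorem commute_map_of_isIdempotentElem (hred : ∀ z ∈ I, f z ^ 2 = 0 → f z = 0) {e : R}
    (he : e ∈ I) (hidem : IsIdempotentElem (f e)) (r : R) : Commute (f e) (f r) := by
  have hright : f e * f r * (1 - f e) = 0 := by
    simpa using hred (e * r * (1 - e)) (I.mul_mem_right _ _ (I.mul_mem_right _ _ he))
      (by simpa using hidem.mul_mul_one_sub_sq_eq_zero (f r))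
  have hleft : (1 - f e) * f r * f e = 0 := by
    simpa using hred ((1 - e) * r * e) (I.mul_mem_left _ _ he)
      (by simpa using hidem.one_sub_mul_mul_sq_eq_zero (f r))
  rw [mul_sub, mul_one, sub_eq_zero] at hright
  rw [sub_mul, sub_mul, one_mul, sub_eq_zero] at hleft
  exact hright.trans hleft.symm

theorem isUnit_map_sq_add (hred : ∀ z ∈ I, f z ^ 2 = 0 → f z = 0) {a x : R} (ha : a ∈ I)
    (hidem : IsIdempotentElem (f (a * x))) :
    IsUnit (f (a ^ 2 + (1 - a * x) * (1 - a ^ 2))) := by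
  have hax : a * x ∈ I := I.mul_mem_right _ _ ha
  have hEA := commute_map_of_isIdempotentElem f hred hax hidem a
  have hEX := commute_map_of_isIdempotentElem f hred hax hidem x
  rw [map_mul] at hidem hEA hEX
  have hF : Commute (f a * f x - f x * f a * (f a * f x)) (f a) := by
    have hFidem := hidem.isIdempotentElem_sub_mul_mul hEA hEX rfl
    simpa only [map_sub, map_mul] using
      commute_map_of_isIdempotentElem f hred (e := a * x - x * a * (a * x))
        (I.sub_mem hax (I.mul_mem_left _ _ hax)) (by simpa only [map_sub, map_mul] using hFidem) a
  have hXA := hidem.mul_mul_eq_self_of_commute hEA rfl hF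
  have hunit := (hidem.isUnit_one_sub_add_mul hEA hEX rfl hXA).pow 2
  rw [hidem.sq_one_sub_add_mul hEA] at hunit
  simpa only [map_add, map_mul, map_sub, map_one, map_pow] using hunit

end ReducedModulo

section SquareStable

variable {R : Type*} [Ring R] {I : TwoSidedIdeal R}

theorem SquareStable.mem_jacobson_bot_of_sq_mem (hSS : SquareStable I) {a : R} (ha : a ∈ I)
    (ha2 : a ^ 2 ∈ (⊥ : TwoSidedIdeal R).jacobson) : a ∈ (⊥ : TwoSidedIdeal R).jacobson := by
  refine mem_jacobson_bot_of_forall_exists_mul_eq_one fun x => ?_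
  obtain ⟨y, hy⟩ := hSS a ha (1 - a * x) ⟨x, 1, by rw [mul_one, add_sub_cancel]⟩
  have hunit : IsUnit ((1 - a * x) * y) := by
    simpa using hy.add_mem_jacobson_bot (neg_mem ha2)
  exact ⟨y * hunit.unit⁻¹, by rw [← mul_assoc, hunit.mul_val_inv]⟩

theorem isUnit_sq_add_of_isIdempotentElem_mul
    (hP : ∀ a ∈ I, a ^ 2 ∈ (⊥ : TwoSidedIdeal R).jacobson → a ∈ (⊥ : TwoSidedIdeal R).jacobson)
    {a x : R} (ha : a ∈ I) (hidem : IsIdempotentElem (a * x)) :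
    IsUnit (a ^ 2 + (1 - a * x) * (1 - a ^ 2)) := by
  let f := Ideal.Quotient.mk (asIdeal (⊥ : TwoSidedIdeal R).jacobson)
  have hker : ∀ r, f r = 0 ↔ r ∈ (⊥ : TwoSidedIdeal R).jacobson := fun r => by
    simp [f, Ideal.Quotient.eq_zero_iff_mem, mem_asIdeal]
  have hred : ∀ z ∈ I, f z ^ 2 = 0 → f z = 0 := fun z hz hz2 =>
    (hker z).2 (hP z hz ((hker _).1 (by rwa [map_pow])))
  exact isUnit_of_isUnit_map f Ideal.Quotient.mk_surjective (fun r => (hker r).1)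
    (isUnit_map_sq_add f hred ha (hidem.map f))

theorem squareStable_of_forall_sq_mem_jacobson_bot (hI : ExchangeIdeal I)
    (hP : ∀ a ∈ I, a ^ 2 ∈ (⊥ : TwoSidedIdeal R).jacobson → a ∈ (⊥ : TwoSidedIdeal R).jacobson) :
    SquareStable I := by
  rintro a ha b ⟨x, y, hxy⟩
  obtain ⟨_, hidem, ⟨s, rfl⟩, ⟨t, ht⟩⟩ := hI (a * x) (I.mul_mem_right a x ha)
  rw [mul_assoc] at hidem ht
  have hby : b * y = 1 - a * x := eq_sub_of_add_eq' hxy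
  refine ⟨y * t * (1 - a * (x * s)) * (1 - a ^ 2), ?_⟩
  have hb : b * (y * t * (1 - a * (x * s)) * (1 - a ^ 2)) = (1 - a * (x * s)) * (1 - a ^ 2) :=
    calc b * (y * t * (1 - a * (x * s)) * (1 - a ^ 2))
        = b * y * t * (1 - a * (x * s)) * (1 - a ^ 2) := by simp only [mul_assoc]
      _ = (1 - a * (x * s)) * (1 - a ^ 2) := by rw [hby, ← ht, hidem.one_sub.eq]
  rw [hb]
  exact isUnit_sq_add_of_isIdempotentElem_mul hP ha hidem

end SquareStable

theorem stmt8 {R : Type*} [Ring R] (I : TwoSidedIdeal R) (hI : ExchangeIdeal I) :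
    SquareStable I ↔
      ∀ a ∈ I, a ^ 2 ∈ (⊥ : TwoSidedIdeal R).jacobson → a ∈ (⊥ : TwoSidedIdeal R).jacobson :=
  ⟨fun hSS _ ha ha2 => hSS.mem_jacobson_bot_of_sq_mem ha ha2,
    squareStable_of_forall_sq_mem_jacobson_bot hI⟩
end

section
/- An exchange ring R has square stable range one if and only if for every regular element a ∈ R, the image of a in R/J(R) is strongly regular. -/
/-!
Square stable range one, applied to `aR + (1 - ax)R = R` for `a = axa`, gives `a ∈ a²R`; applied
to a one-sided inverse pair it shows that `R` is Dedekind-finite. In the corner ring `axRax` the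
element `a²x` then has a right inverse, hence an inverse, and this yields `a ∈ Ra²`. So regular
elements of `R` are already strongly regular, and so are their images in `R/J(R)`.

Conversely, in an exchange ring regular elements of `R/J(R)` lift to regular elements of `R`, and
units lift along `R → R/J(R)`, so one may work in a ring `Q` whose regular elements are all
strongly regular. For `v` strongly regular with group idempotent `g`, `v + 1 - g` is a unit, and
so is its perturbation `v + 1 - f` whenever `fv = v` and `f ∈ vQ`. If `aQ + bQ = Q`, the exchange
property gives an idempotent `e ∈ aQ` with `1 - e ∈ bQ`; applying the unit criterion to `(ea, e)`
and to `(ga, g)` gives two units whose product lies in `a² + (1 - e)Q ⊆ a² + bQ`.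
-/

section

variable {R : Type*} [Ring R]

namespace SquareStableRangeOne

theorem isDedekindFiniteMonoid (h : SquareStableRangeOne R) : IsDedekindFiniteMonoid R where
  mul_eq_one_symm {a b} hab := by
    obtain ⟨y, u, hu⟩ := h b (1 - b * a) ⟨a, 1, by noncomm_ring⟩
    have hau : a * u = b := by
      rw [hu, mul_add, ← mul_assoc, mul_sub, mul_one, ← mul_assoc, hab, one_mul, sq,
        ← mul_assoc, hab, one_mul, sub_self, zero_mul, add_zero]
    have hbu : b * ↑u⁻¹ = a := by rw [← hau, Units.mul_inv_cancel_right]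
    -- `b` has the left inverse `a` and the right inverse `u⁻¹ * b`
    have hright : b * (↑u⁻¹ * b) = 1 := by rw [← mul_assoc, hbu, hab]
    rw [left_inv_eq_right_inv hab hright, ← mul_assoc, hbu, hab]

theorem exists_eq_sq_mul (h : SquareStableRangeOne R) {a : R} (ha : IsRegularElem a) :
    ∃ t, a = a ^ 2 * t := by
  obtain ⟨x, hx⟩ := ha
  obtain ⟨y, u, hu⟩ := h a (1 - a * x) ⟨x, 1, by noncomm_ring⟩
  have hax : a * x * (1 - a * x) = 0 := by
    rw [mul_sub, mul_one, ← mul_assoc, ← hx, sub_self]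
  have haxu : a * x * u = a ^ 2 := by
    rw [hu, mul_add, ← mul_assoc, hax, zero_mul, add_zero, sq, ← mul_assoc, ← hx]
  refine ⟨↑u⁻¹ * a, ?_⟩
  rw [← mul_assoc, ← haxu, Units.mul_inv_cancel_right, ← hx]

end SquareStableRangeOne

theorem IsIdempotentElem.mul_eq_symm_of_mem_corner [IsDedekindFiniteMonoid R] {e γ δ : R}
    (he : IsIdempotentElem e) (hγ : γ ∈ Subsemigroup.corner e) (hδ : δ ∈ Subsemigroup.corner e)
    (h : γ * δ = e) : δ * γ = e := by
  rw [Subsemigroup.mem_corner_iff he] at hγ hδ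
  -- `γ + (1 - e)` and `δ + (1 - e)` are one-sided inverses of each other in `R`
  have key : ∀ {p q : R}, p * e = p → e * q = q →
      (p + (1 - e)) * (q + (1 - e)) = p * q + (1 - e) := fun {p q} hp hq => by
    have : (p + (1 - e)) * (q + (1 - e)) =
        p * q + (p - p * e) + (q - e * q) + (1 - e - e + e * e) := by noncomm_ring
    rw [this, hp, hq, he.eq]; abel
  have := mul_eq_one_symm (a := γ + (1 - e)) (b := δ + (1 - e)) (by rw [key hγ.2 hδ.1, h]; abel)
  rw [key hδ.2 hγ.1] at this
  rw [← add_left_inj (1 - e), this]; abel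

theorem IsRegularElem.isStronglyRegularElem_of_eq_sq_mul [IsDedekindFiniteMonoid R] {a t : R}
    (ha : IsRegularElem a) (ht : a = a ^ 2 * t) : IsStronglyRegularElem a := by
  obtain ⟨x, hx⟩ := ha
  refine ⟨⟨t, ht⟩, a * t * x, ?_⟩
  have hx₁ : a * (x * a) = a := by rw [← mul_assoc, ← hx]
  have hx' : ∀ c, a * (x * (a * c)) = a * c := fun c => by
    rw [← mul_assoc, ← mul_assoc, ← hx]
  have ht' : ∀ c, a * (a * (t * c)) = a * c := fun c => by
    rw [← mul_assoc, ← mul_assoc, ← sq, ← ht]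
  have he : IsIdempotentElem (a * x) := by
    rw [IsIdempotentElem, mul_assoc, hx' x]
  have hcorner : ∀ c, (a * x) * c * (a * x) ∈ Subsemigroup.corner (a * x) := fun c => ⟨c, rfl⟩
  -- in the corner ring at `ax`, `a²x` has the right inverse `atxax`, so it is invertible there
  have hδγ := he.mul_eq_symm_of_mem_corner (hcorner a) (hcorner (a * t * x))
    (by simp only [mul_assoc, hx', hx₁, ht'])
  calc a = a * x * a := hx
    _ = a * x * (a * t * x) * (a * x) * (a * x * a * (a * x)) * a := by rw [hδγ]
    _ = a * t * x * a ^ 2 := by simp only [mul_assoc, sq, hx', hx₁]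

theorem SquareStableRangeOne.isStronglyRegularElem (h : SquareStableRangeOne R) {a : R}
    (ha : IsRegularElem a) : IsStronglyRegularElem a :=
  have := h.isDedekindFiniteMonoid
  have ⟨_, ht⟩ := h.exists_eq_sq_mul ha
  ha.isStronglyRegularElem_of_eq_sq_mul ht

theorem IsStronglyRegularElem.map {S F : Type*} [Ring S] [FunLike F R S] [RingHomClass F R S]
    (f : F) {a : R} (ha : IsStronglyRegularElem a) : IsStronglyRegularElem (f a) := by
  obtain ⟨⟨x, hx⟩, ⟨y, hy⟩⟩ := ha
  exact ⟨⟨f x, by rw [← map_pow, ← map_mul, ← hx]⟩, ⟨f y, by rw [← map_pow, ← map_mul, ← hy]⟩⟩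

theorem IsStronglyRegularElem.exists_groupInverse {v : R} (hv : IsStronglyRegularElem v) :
    ∃ w, v * w = w * v ∧ v * w * v = v ∧ w * v * w = w := by
  obtain ⟨⟨σ, hσ⟩, ⟨τ, hτ⟩⟩ := hv
  have hvσ : v * σ = τ * v := by
    calc v * σ = τ * (v ^ 2 * σ) := by rw [← mul_assoc, ← hτ]
      _ = τ * v := by rw [← hσ]
  have hvw : v * (v * σ * σ) = τ * v := by rw [← mul_assoc, ← mul_assoc, ← sq, ← hσ, hvσ]
  have hwv : v * σ * σ * v = τ * v := by
    rw [hvσ, mul_assoc τ, hvσ, mul_assoc, mul_assoc, ← sq, ← hτ]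
  refine ⟨v * σ * σ, by rw [hvw, hwv], ?_, ?_⟩
  · rw [hvw, mul_assoc, ← sq, ← hτ]
  · rw [hwv, mul_assoc, hvw, hvσ, mul_assoc τ v σ, hvσ]

theorem isUnit_add_of_mul_mul_eq_zero {u u' κ : R} (hu : u * u' = 1) (hu' : u' * u = 1)
    (hκ : κ * u' * κ = 0) : IsUnit (u + κ) := by
  have hfactor : u + κ = u * (1 + u' * κ) := by rw [mul_add, mul_one, ← mul_assoc, hu, one_mul]
  rw [hfactor]
  refine (isUnit_iff_exists.2 ⟨u', hu, hu'⟩).mul (IsNilpotent.isUnit_one_add ⟨2, ?_⟩)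
  rw [sq, mul_assoc, ← mul_assoc κ, hκ, mul_zero]

theorem IsStronglyRegularElem.isUnit_add_one_sub {v f ρ : R} (hv : IsStronglyRegularElem v)
    (hfv : f * v = v) (hvρ : v * ρ = f) : IsUnit (v + 1 - f) := by
  obtain ⟨w, hcomm, hvwv, hwvw⟩ := hv.exists_groupInverse
  obtain ⟨g, hg⟩ : ∃ g, g = v * w := ⟨_, rfl⟩
  have hvw : v * w = g := hg.symm
  have hgv : g * v = v := by rw [hg, hvwv]
  have hvg : v * g = v := by rw [hg, hcomm, ← mul_assoc, hvwv]
  have hwv : w * v = g := by rw [hg, hcomm]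
  have hgw : g * w = w := by rw [hg, hcomm, hwvw]
  have hwg : w * g = w := by rw [hg, ← mul_assoc, hwvw]
  have hgg : g * g = g := by rw [hg, ← mul_assoc, hvwv]
  have hfg : f * g = g := by rw [hg, ← mul_assoc, hfv]
  have hgf : g * f = f := by rw [← hvρ, ← mul_assoc, hgv]
  have hfw : f * w = w := by rw [← hgw, ← mul_assoc, hfg]
  -- `v + 1 - g` is a unit with inverse `w + 1 - g`, and `v + 1 - f` differs from it by `g - f`
  have hsplit : v + 1 - f = (v + 1 - g) + (g - f) := by abel
  rw [hsplit]
  refine isUnit_add_of_mul_mul_eq_zero (u' := w + 1 - g) ?_ ?_ ?_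
  · simp only [mul_sub, sub_mul, mul_add, add_mul, mul_one, one_mul, hvw, hvg, hgw, hgg]
    abel
  · simp only [mul_sub, sub_mul, mul_add, add_mul, mul_one, one_mul, hwv, hwg, hgv, hgg]
    abel
  · have h₁ : (w + 1 - g) * (g - f) = w - w * f := by
      simp only [mul_sub, sub_mul, add_mul, one_mul, hwg, hgg, hgf]; abel
    have h₂ : (g - f) * (w - w * f) = 0 := by
      simp only [mul_sub, sub_mul, ← mul_assoc, hgw, hfw]; abel
    rw [mul_assoc, h₁, h₂]

theorem exists_isUnit_sq_add_mul_of_forall_isStronglyRegularElem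
    (hR : ∀ v : R, IsRegularElem v → IsStronglyRegularElem v) {a b e : R}
    (he : IsIdempotentElem e) (hea : ∃ r, e = a * r) (heb : ∃ s, 1 - e = b * s) :
    ∃ y, IsUnit (a ^ 2 + b * y) := by
  obtain ⟨r, hr⟩ := hea
  obtain ⟨s, hs⟩ := heb
  have hunit : ∀ {v f ρ : R}, f * v = v → v * ρ = f → IsUnit (v + 1 - f) :=
    fun {v _ ρ} hfv hvρ => (hR v ⟨ρ, by rw [hvρ, hfv]⟩).isUnit_add_one_sub hfv hvρ
  obtain ⟨v, hv⟩ : ∃ v, v = e * a := ⟨_, rfl⟩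
  have hev : e * v = v := by rw [hv, ← mul_assoc, he.eq]
  have hvr : v * r = e := by rw [hv, mul_assoc, ← hr, he.eq]
  obtain ⟨w, hcomm, hvwv, -⟩ := (hR v ⟨r, by rw [hvr, hev]⟩).exists_groupInverse
  obtain ⟨g, hg⟩ : ∃ g, g = v * w := ⟨_, rfl⟩
  have hgv : g * v = v := by rw [hg, hvwv]
  have hvg : v * g = v := by rw [hg, hcomm, ← mul_assoc, hvwv]
  have hgg : g * g = g := by rw [hg, ← mul_assoc, hvwv]
  have heg : e * g = g := by rw [hg, ← mul_assoc, hev]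
  have hge : g * e = e := by rw [← hvr, ← mul_assoc, hgv]
  have hunit₁ : IsUnit (v + 1 - e) := hunit hev hvr
  have hunit₂ : IsUnit (g * a + 1 - g) :=
    hunit (by rw [← mul_assoc, hgg])
      (by rw [mul_assoc, ← mul_assoc a, ← hr, ← mul_assoc, hge, heg])
  -- the product lies in `a² + (1 - e)R ⊆ a² + bR`
  have he_mul : e * ((v + 1 - e) * (g * a + 1 - g)) = e * a ^ 2 := by
    have hev' : e * (v + 1 - e) = v := by
      rw [mul_sub, mul_add, mul_one, hev, he.eq, add_sub_cancel_right]
    rw [← mul_assoc, hev', mul_sub, mul_add, mul_one, ← mul_assoc, hvg, add_sub_cancel_right,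
      hv, sq, mul_assoc]
  obtain ⟨W, hW⟩ : ∃ W, W = (v + 1 - e) * (g * a + 1 - g) := ⟨_, rfl⟩
  rw [← hW] at he_mul
  refine ⟨s * (W - a ^ 2), ?_⟩
  rw [← mul_assoc, ← hs, sub_mul, one_mul, mul_sub, he_mul, sub_self, sub_zero,
    add_sub_cancel, hW]
  exact hunit₁.mul hunit₂

theorem IsIdempotentElem.eq_of_eq_mul_of_one_sub_eq_mul {c E r s : R} (hc : IsIdempotentElem c)
    (hr : E = c * r) (hs : 1 - E = (1 - c) * s) : E = c :=
  calc E = c * E := by rw [hr, ← mul_assoc, hc.eq]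
    _ = c * E + c * (1 - E) := by
      rw [hs, ← mul_assoc, mul_sub, mul_one, hc.eq, sub_self, zero_mul, add_zero]
    _ = c := by rw [← mul_add, add_sub_cancel, mul_one]

theorem ExchangeIdeal.exists_isRegularElem_map_eq {S : Type*} [Ring S]
    (hR : ExchangeIdeal (⊤ : TwoSidedIdeal R))
    {f : R →+* S} (hf : Function.Surjective f) {z : S} (hz : IsRegularElem z) :
    ∃ Z, IsRegularElem Z ∧ f Z = z := by
  obtain ⟨m, hm⟩ := hz
  obtain ⟨Z, rfl⟩ := hf z
  obtain ⟨M, rfl⟩ := hf m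
  obtain ⟨E, hE, ⟨r, hr⟩, ⟨s, hs⟩⟩ := hR (Z * M) trivial
  have hfE : f E = f Z * f M := by
    refine IsIdempotentElem.eq_of_eq_mul_of_one_sub_eq_mul (r := f r) (s := f s) ?_ ?_ ?_
    · rw [IsIdempotentElem, ← mul_assoc, ← hm]
    · rw [hr, map_mul, map_mul]
    · rw [← map_one f, ← map_sub, hs, map_mul, map_sub, map_one, map_mul]
  refine ⟨E * Z, ⟨M * r, ?_⟩, by rw [map_mul, hfE, ← hm]⟩
  calc E * Z = E * E * E * Z := by rw [hE.eq, hE.eq]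
    _ = E * Z * (M * r) * (E * Z) := by rw [hr]; simp only [mul_assoc]

namespace TwoSidedIdeal

theorem isUnit_one_add_of_mem_jacobson_bot {j : R} (hj : j ∈ (⊥ : TwoSidedIdeal R).jacobson) :
    IsUnit (1 + j) := by
  have hleft : ∀ j ∈ (⊥ : TwoSidedIdeal R).jacobson, ∃ z, z * (1 + j) = 1 := fun j hj => by
    obtain ⟨z, hz⟩ := mem_jacobson_iff.1 hj 1
    rw [mem_bot, mul_one, sub_eq_zero] at hz
    exact ⟨z, by rw [mul_add, mul_one, add_comm, hz]⟩
  obtain ⟨z, hz⟩ := hleft j hj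
  -- the left inverse `z = 1 - z * j` lies in `1 + J` as well, so it has a left inverse too
  obtain ⟨z', hz'⟩ := hleft (-(z * j)) (neg_mem _ (mul_mem_left _ z j hj))
  have hz_eq : 1 + -(z * j) = z := by
    rw [← sub_eq_add_neg, ← hz, mul_add, mul_one, add_sub_cancel_right]
  rw [hz_eq] at hz'
  exact isUnit_iff_exists.2 ⟨z, by rw [← left_inv_eq_right_inv hz' hz, hz'], hz⟩

theorem isUnit_of_isUnit_mk'_jacobson_bot {u : R}
    (h : IsUnit ((⊥ : TwoSidedIdeal R).jacobson.ringCon.mk' u)) : IsUnit u := by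
  have hlift : ∀ p : R, (⊥ : TwoSidedIdeal R).jacobson.ringCon.mk' p = 1 → IsUnit p :=
    fun p hp => by
      rw [← map_one (RingCon.mk' _), RingCon.coe_mk', RingCon.eq, rel_iff] at hp
      simpa using isUnit_one_add_of_mem_jacobson_bot hp
  obtain ⟨V', hV₁, hV₂⟩ := isUnit_iff_exists.1 h
  obtain ⟨V, rfl⟩ := RingCon.mk'_surjective _ V'
  obtain ⟨x, hx⟩ := (hlift (u * V) (by rw [map_mul, hV₁])).exists_right_inv
  obtain ⟨y, hy⟩ := (hlift (V * u) (by rw [map_mul, hV₂])).exists_left_inv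
  rw [mul_assoc] at hx
  rw [← mul_assoc] at hy
  exact isUnit_iff_exists.2 ⟨V * x, hx, by rw [← left_inv_eq_right_inv hy hx, hy]⟩

end TwoSidedIdeal

end

theorem stmt11 {R : Type*} [Ring R] (hR : ∀ a : R, ∃ e : R, IsIdempotentElem e ∧
      (∃ x : R, e = a * x) ∧ (∃ y : R, 1 - e = (1 - a) * y)) :
    SquareStableRangeOne R ↔
      ∀ a : R, IsRegularElem a →
        IsStronglyRegularElem ((a : ((⊥ : TwoSidedIdeal R).jacobson).ringCon.Quotient)) := by
  let π := ((⊥ : TwoSidedIdeal R).jacobson).ringCon.mk'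
  constructor
  · exact fun hS a ha => (hS.isStronglyRegularElem ha).map π
  · rintro H a b ⟨x, y, hxy⟩
    have hQ : ∀ z, IsRegularElem z → IsStronglyRegularElem z := fun z hz => by
      obtain ⟨Z, hZ, rfl⟩ :=
        ExchangeIdeal.exists_isRegularElem_map_eq (fun a _ => hR a)
          (RingCon.mk'_surjective _) hz
      exact H Z hZ
    obtain ⟨e, he, ⟨r, hr⟩, ⟨s, hs⟩⟩ := hR (a * x)
    have hes : 1 - e = b * (y * s) := by rw [hs, ← eq_sub_of_add_eq' hxy, mul_assoc]
    obtain ⟨y', hy'⟩ := exists_isUnit_sq_add_mul_of_forall_isStronglyRegularElem hQ (he.map π)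
      ⟨π (x * r), by rw [← map_mul, ← mul_assoc, ← hr]⟩
      ⟨π (y * s), by rw [← map_mul, ← hes, map_sub, map_one]⟩
    obtain ⟨Y, rfl⟩ := RingCon.mk'_surjective _ y'
    refine ⟨Y, TwoSidedIdeal.isUnit_of_isUnit_mk'_jacobson_bot ?_⟩
    rwa [map_add, map_mul, map_pow]
end

section
/- Let I be a regular ideal of a ring R. Then I is square stable if and only if the corner ring eRe is strongly regular for every idempotent e ∈ I. -/
section StronglyRegular

variable {S : Type*} [Ring S]

theorem isReduced_of_forall_eq_sq_mul (h : ∀ a : S, ∃ b, a = a ^ 2 * b) : IsReduced S :=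
  (isReduced_iff_pow_one_lt 2 one_lt_two).mpr fun a ha => by
    obtain ⟨b, hb⟩ := h a
    rw [hb, ha, zero_mul]

theorem IsReduced.mul_eq_zero_symm [IsReduced S] {a b : S} (h : a * b = 0) : b * a = 0 :=
  eq_zero_of_pow_eq_zero (n := 2) <| by
    rw [pow_two, mul_assoc, ← mul_assoc a, h, zero_mul, mul_zero]

theorem IsIdempotentElem.commute_of_isReduced [IsReduced S] {e : S} (he : IsIdempotentElem e)
    (x : S) : Commute e x := by
  have hleft : e * x * (1 - e) = 0 := eq_zero_of_pow_eq_zero (n := 2) <| by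
    linear_combination (norm := noncomm_ring) e * x * he.one_sub_mul_self * x * (1 - e)
  have hright : (1 - e) * x * e = 0 := eq_zero_of_pow_eq_zero (n := 2) <| by
    linear_combination (norm := noncomm_ring) (1 - e) * x * he.mul_one_sub_self * x * e
  show e * x = x * e
  linear_combination (norm := noncomm_ring) hleft - hright

theorem exists_isIdempotentElem_isUnit_sq_eq_mul (h : ∀ a : S, ∃ b, a = a ^ 2 * b) (a : S) :
    ∃ e u : S, IsIdempotentElem e ∧ IsUnit u ∧ e * a = a ∧ a ^ 2 = e * u := by
  have := isReduced_of_forall_eq_sq_mul h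
  obtain ⟨t, ht⟩ := h a
  have hat : a * a * t = a := by rw [← pow_two, ← ht]
  have he : IsIdempotentElem (a * t) := by
    have h0 : a * (a * (t - t * a * t)) = 0 := by
      linear_combination (norm := noncomm_ring) -(hat * (a * t))
    have h1 : a * (t - t * a * t) = 0 := eq_zero_of_pow_eq_zero (n := 2) <| by
      linear_combination (norm := noncomm_ring) IsReduced.mul_eq_zero_symm h0 * (t - t * a * t)
    show a * t * (a * t) = a * t
    linear_combination (norm := noncomm_ring) -h1
  have hea : a * t * a = a := by rw [(he.commute_of_isReduced a).eq, ← mul_assoc, hat]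
  have hf : IsIdempotentElem (t * a) := by
    show t * a * (t * a) = t * a
    linear_combination (norm := noncomm_ring) t * hea
  have hta : t * a = a * t :=
    calc t * a = t * a * (a * t) := by linear_combination (norm := noncomm_ring) -(t * hat)
      _ = a * t * (t * a) := (hf.commute_of_isReduced _).eq
      _ = a * (t * (t * a)) := by noncomm_ring
      _ = a * (t * a * t) := by rw [(hf.commute_of_isReduced t).eq]
      _ = a * t := by linear_combination (norm := noncomm_ring) hea * t
  have hae : a * (a * t) = a := by rw [← mul_assoc, hat]
  have het : a * t * t = t * (a * t) := (he.commute_of_isReduced t).eq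
  -- `a * t` is a central idempotent and `a + 1 - a * t` a unit with inverse `a * t * t + 1 - a * t`
  have hwv : (a + 1 - a * t) * (a * t * t + 1 - a * t) = 1 := by
    linear_combination (norm := noncomm_ring) hae * t - hae - he.eq * t + he.eq
  have hvw : (a * t * t + 1 - a * t) * (a + 1 - a * t) = 1 := by
    linear_combination (norm := noncomm_ring)
      a * t * hta + 2 * he.eq + het - het * (a * t) - t * he.eq - hea
  refine ⟨a * t, (a + 1 - a * t) ^ 2, he, (Units.mk _ _ hwv hvw).isUnit.pow 2, hea, ?_⟩
  linear_combination (norm := noncomm_ring) -(hea - he.eq) * (a + 1 - a * t) + hat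

end StronglyRegular

namespace IsIdempotentElem

variable {R : Type*} [Ring R] {g : R}

theorem isUnit_val_add_one_sub (hg : IsIdempotentElem g) {u : hg.Corner} (hu : IsUnit u) :
    IsUnit (u.1 + (1 - g)) := by
  obtain ⟨⟨u, v, huv, hvu⟩, rfl⟩ := hu
  have huv : u.1 * v.1 = g := congrArg Subtype.val huv
  have hvu : v.1 * u.1 = g := congrArg Subtype.val hvu
  obtain ⟨hgu, hug⟩ := (Subsemigroup.mem_corner_iff hg).mp u.2
  obtain ⟨hgv, hvg⟩ := (Subsemigroup.mem_corner_iff hg).mp v.2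
  exact (Units.mk (u.1 + (1 - g)) (v.1 + (1 - g))
    (by linear_combination (norm := noncomm_ring) huv - hug + hg.eq - hgv)
    (by linear_combination (norm := noncomm_ring) hvu - hvg + hg.eq - hgu)).isUnit

theorem exists_isIdempotentElem_isUnit_sq_eq_mul_of_mem_corner (hg : IsIdempotentElem g)
    (h : ∀ a : R, a = g * a * g → ∃ b : R, b = g * b * g ∧ a = a ^ 2 * b)
    {a : R} (ha : a = g * a * g) :
    ∃ e u : R, IsIdempotentElem e ∧ IsUnit u ∧ e * a = a ∧ a ^ 2 = e * u := by
  have hcorner : ∀ s : hg.Corner, ∃ b : hg.Corner, s = s ^ 2 * b := by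
    intro s
    obtain ⟨hgs, hsg⟩ := (Subsemigroup.mem_corner_iff hg).mp s.2
    obtain ⟨b, hb, hsb⟩ := h s.1 (by rw [hgs, hsg])
    rw [pow_two] at hsb ⊢
    exact ⟨⟨b, b, hb.symm⟩, Subtype.ext hsb⟩
  obtain ⟨x, rfl⟩ : ∃ x : hg.Corner, x.1 = a := ⟨⟨a, a, ha.symm⟩, rfl⟩
  obtain ⟨e, u, he, hu, hea, hxu⟩ := exists_isIdempotentElem_isUnit_sq_eq_mul hcorner x
  refine ⟨e.1, u.1 + (1 - g), congrArg Subtype.val he, hg.isUnit_val_add_one_sub hu,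
    congrArg Subtype.val hea, ?_⟩
  have hxu : x.1 * x.1 = e.1 * u.1 := congrArg Subtype.val ((pow_two x).symm.trans hxu)
  have heg : e.1 * g = e.1 := ((Subsemigroup.mem_corner_iff hg).mp e.2).2
  linear_combination (norm := noncomm_ring) hxu + heg

theorem add_sub_mul_of_mul_eq_zero {e f : R} (he : IsIdempotentElem e) (hf : IsIdempotentElem f)
    (hfe : f * e = 0) : IsIdempotentElem (e + f - e * f) := by
  show (e + f - e * f) * (e + f - e * f) = e + f - e * f
  linear_combination (norm := noncomm_ring)
    he.eq + hf.eq - e * hf.eq - he.eq * f + hfe - hfe * f - e * hfe + e * hfe * f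

end IsIdempotentElem

section Ideals

variable {R : Type*} [Ring R]

theorem isUnit_sq_add_mul_of_sq_eq_mul {a b e u x y : R} (he : IsIdempotentElem e)
    (hu : IsUnit u) (hea : e * a = a) (hau : a ^ 2 = e * u) (hxy : a * x + b * y = 1) :
    IsUnit (a ^ 2 + b * (y * (1 - e) * u)) := by
  have hby : (1 - e) * (b * y) * (1 - e) = 1 - e := by
    linear_combination (norm := noncomm_ring) (1 - e) * hxy * (1 - e) + hea * x * (1 - e) + he.eq
  have hsq : (e * (b * y) * (1 - e)) ^ 2 = 0 := by
    linear_combination (norm := noncomm_ring) e * (b * y) * he.mul_one_sub_self * (b * y) * (1 - e)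
  have hfactor : a ^ 2 + b * (y * (1 - e) * u) = (1 + e * (b * y) * (1 - e)) * u := by
    linear_combination (norm := noncomm_ring) hau + hby * u
  rw [hfactor]
  exact (IsNilpotent.isUnit_one_add ⟨2, hsq⟩).mul hu

theorem RegularIdeal.exists_isIdempotentElem_mul_eq {I : TwoSidedIdeal R} (hI : RegularIdeal I)
    {a : R} (ha : a ∈ I) : ∃ g ∈ I, IsIdempotentElem g ∧ g * a = a ∧ a * g = a := by
  obtain ⟨z, hz⟩ := hI a ha
  have hc : a - a * (a * z) ∈ I := I.sub_mem ha (I.mul_mem_left _ _ (I.mul_mem_right _ _ ha))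
  obtain ⟨w, hw⟩ := hI _ hc
  generalize hc_def : a - a * (a * z) = c at hc hw
  have he : IsIdempotentElem (a * z) := by
    show a * z * (a * z) = a * z
    linear_combination (norm := noncomm_ring) -hz * z
  have hf : IsIdempotentElem (w * c) := by
    show w * c * (w * c) = w * c
    linear_combination (norm := noncomm_ring) -w * hw
  have hfe : w * c * (a * z) = 0 := by
    linear_combination (norm := noncomm_ring) -(w * hc_def * a * z) + w * a * hz * z
  have hfa : w * c * a = 0 := by linear_combination (norm := noncomm_ring) hfe * a + w * c * hz
  -- `a * z` is a left unit of `a`, and `w * c` a right unit of `c`, which is `a` times `1 - a * z`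
  refine ⟨a * z + w * c - a * z * (w * c), ?_, he.add_sub_mul_of_mul_eq_zero hf hfe, ?_, ?_⟩
  · exact I.sub_mem (I.add_mem (I.mul_mem_right _ _ ha) (I.mul_mem_left _ _ hc))
      (I.mul_mem_left _ _ (I.mul_mem_left _ _ hc))
  · linear_combination (norm := noncomm_ring) -hz + hfa - a * z * hfa
  · linear_combination (norm := noncomm_ring) -hw + hc_def * w * c - hc_def

theorem SquareStable.exists_eq_sq_mul {I : TwoSidedIdeal R} (hI : SquareStable I) {a x : R}
    (ha : a ∈ I) (hx : a = a * x * a) : ∃ r : R, a = a ^ 2 * r := by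
  obtain ⟨y, u, hu⟩ := hI a ha (1 - a * x) ⟨x, 1, by noncomm_ring⟩
  have hxu : a * x * u = a ^ 2 := by
    rw [hu]
    linear_combination (norm := noncomm_ring) -(hx * a) + hx * x * y
  refine ⟨u⁻¹ * a, ?_⟩
  calc a = a * x * u * u⁻¹ * a := by rw [Units.mul_inv_cancel_right]; exact hx
    _ = a ^ 2 * (u⁻¹ * a) := by rw [hxu, mul_assoc]

end Ideals

theorem stmt16 {R : Type*} [Ring R] (I : TwoSidedIdeal R) (hI : RegularIdeal I) :
    SquareStable I ↔
      ∀ e ∈ I, IsIdempotentElem e →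
        ∀ a : R, a = e * a * e → ∃ b : R, b = e * b * e ∧ a = a ^ 2 * b := by
  constructor
  · intro hSS e heI he a ha
    have haI : a ∈ I := ha ▸ I.mul_mem_right _ _ (I.mul_mem_right _ _ heI)
    obtain ⟨x, hx⟩ := hI a haI
    obtain ⟨r, hr⟩ := hSS.exists_eq_sq_mul haI hx
    have hae : a * e = a := by linear_combination (norm := noncomm_ring) ha * e - ha + e * a * he.eq
    refine ⟨e * r * e, by simp only [mul_assoc, he.eq, he.mul_self_mul], ?_⟩
    linear_combination (norm := noncomm_ring) hr * e - hae - a * hae * r * e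
  · rintro h a haI b ⟨x, y, hxy⟩
    obtain ⟨g, hgI, hg, hga, hag⟩ := hI.exists_isIdempotentElem_mul_eq haI
    obtain ⟨e, u, he, hu, hea, hau⟩ :=
      hg.exists_isIdempotentElem_isUnit_sq_eq_mul_of_mem_corner (h g hgI hg) (by rw [hga, hag])
    exact ⟨_, isUnit_sq_add_mul_of_sq_eq_mul he hu hea hau hxy⟩
end
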